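/- Let P be a proper finite propositional logic program and A a set of atoms. Then P has an A-based stable model if and only if P(A) has an A-based stable model M = A ∪ {a} such that a ∉ {a_r : r ∈ P′(A)}. -/

import Mathlib

open scoped Classical

noncomputable section

/-- A propositional logic program rule: a head atom, a finite positive body and a
finite negative body. -/
structure LPRule (α : Type) where
  head : α
  pos : Finset α
  neg : Finset α
deriving DecidableEq

/-- A logic program is a finite set of rules. -/
abbrev LProgram (α : Type) := Finset (LPRule α)

variable {α : Type} [DecidableEq α]

/-- `horn r`: the Horn rule with the same head and positive body as `r`
and empty negative body. -/
def LPRule.horn (r : LPRule α) : LPRule α := ⟨r.head, r.pos, ∅⟩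

/-- A rule `r` is proper if `h(r) ∉ b⁺(r)` and `b⁺(r) ∩ b⁻(r) = ∅`. -/
def LPRule.proper (r : LPRule α) : Prop := r.head ∉ r.pos ∧ r.pos ∩ r.neg = ∅

/-- `At(P)`: the set of atoms occurring in `P`. -/
def atomsP (P : LProgram α) : Finset α := P.sup (fun r => insert r.head (r.pos ∪ r.neg))

/-- `h(P)`: the set of heads of rules of `P`. -/
def headsP (P : LProgram α) : Finset α := P.image LPRule.head

/-- `Neg(P)`: the set of atoms occurring negated in `P`. -/
def negP (P : LProgram α) : Finset α := P.sup LPRule.neg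

/-- The least model of a (Horn) program `Q`, given as a set of rules (negative bodies
are ignored; Horn rules have empty negative bodies): the least set `M` of atoms such
that `h(r) ∈ M` whenever `r ∈ Q` and `b⁺(r) ⊆ M`. -/
def LM (Q : Set (LPRule α)) : Set α :=
  ⋂₀ {M : Set α | ∀ r ∈ Q, (↑r.pos : Set α) ⊆ M → r.head ∈ M}

/-- The reduct `P^S`: delete every rule whose negative body meets `S` and remove the
negative bodies of the remaining rules. -/
def reduct (P : LProgram α) (S : Set α) : Set (LPRule α) :=
  LPRule.horn '' {r | r ∈ P ∧ (↑r.neg : Set α) ∩ S = ∅}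

/-- `M` is a stable model of `P` if `M = LM (P^M)`. -/
def isStable (P : LProgram α) (M : Set α) : Prop :=
  M = LM (reduct P M)

/-- `P(A)`: the rules `r` of `P` with `b⁻(r) ∩ A = ∅` and `b⁺(r) ⊆ A`. -/
def progA (P : LProgram α) (A : Set α) : LProgram α :=
  P.filter (fun r => (↑r.pos : Set α) ⊆ A ∧ (↑r.neg : Set α) ∩ A = ∅)

/-- `M` is an `A`-based stable model of `P`: `M` is a stable model of `P` of the form
`A ∪ {a}` for some atom `a ∉ A`, and `M ⊆ LM (P(A)^M)`. -/
def isABased (P : LProgram α) (A M : Set α) : Prop :=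
  isStable P M ∧ ∃ a, a ∉ A ∧ M = A ∪ {a} ∧ M ⊆ LM (reduct (progA P A) M)

/-!
Write `M = A ∪ {a}`. Since `P(A) ⊆ P`, the reduct `P(A)^M` derives no more than `P^M`; hence if
`M` is stable for `P` and already derived by `P(A)^M`, it is stable for `P(A)`, and conversely
an `M` stable for `P(A)` is stable for `P` as soon as `M` is closed under the rules of `P^M`.
A rule of `P^M` with positive body in `M` but not in `A` comes from a rule `r ∈ P′(A)` with
`a_r = a`, and it keeps `M` closed only if `h(r) ∈ A`: for `h(r) ∉ A`, closure means
`h(r) = a ∈ b⁺(r)`, which a proper rule forbids.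
-/

lemma subset_union_singleton_iff {β : Type} {s A : Set β} {a : β} :
    s ⊆ A ∪ {a} ↔ s ⊆ A ∨ s \ A = {a} := by
  rw [← Set.sdiff_subset_iff, Set.subset_singleton_iff_eq, Set.sdiff_eq_empty]

section

omit [DecidableEq α]

/-- `LM Q` is by definition the intersection of all `M` with `IsModel Q M`. -/
def IsModel (Q : Set (LPRule α)) (M : Set α) : Prop :=
  ∀ r ∈ Q, (↑r.pos : Set α) ⊆ M → r.head ∈ M

lemma LM_subset_of_isModel {Q : Set (LPRule α)} {M : Set α} (hM : IsModel Q M) : LM Q ⊆ M :=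
  Set.sInter_subset_of_mem hM

lemma isModel_LM (Q : Set (LPRule α)) : IsModel Q (LM Q) := fun r hr hpos =>
  Set.mem_sInter.2 fun _ hM => hM r hr (hpos.trans (Set.sInter_subset_of_mem hM))

lemma LM_mono {Q Q' : Set (LPRule α)} (h : Q ⊆ Q') : LM Q ⊆ LM Q' :=
  Set.sInter_subset_sInter fun _ hM r hr => hM r (h hr)

variable {P P' : LProgram α} {S M : Set α} {A : Set α} {a : α}

lemma reduct_mono (h : P' ⊆ P) (S : Set α) : reduct P' S ⊆ reduct P S :=
  Set.image_mono fun _ hr => ⟨h hr.1, hr.2⟩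

lemma isModel_reduct_iff :
    IsModel (reduct P S) M ↔
      ∀ r ∈ P, (↑r.neg : Set α) ∩ S = ∅ → (↑r.pos : Set α) ⊆ M → r.head ∈ M := by
  simp only [IsModel, reduct, Set.forall_mem_image, Set.mem_ofPred_eq, and_imp]
  rfl

lemma isStable.head_mem (h : isStable P M) {r : LPRule α} (hr : r ∈ P)
    (hneg : (↑r.neg : Set α) ∩ M = ∅) (hpos : (↑r.pos : Set α) ⊆ M) : r.head ∈ M := by
  rw [h]
  exact isModel_reduct_iff.1 (isModel_LM _) r hr (h ▸ hneg) (h ▸ hpos)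

lemma isStable_of_subset_of_subset_LM (hP : P' ⊆ P) (h : isStable P M)
    (hM : M ⊆ LM (reduct P' M)) : isStable P' M :=
  hM.antisymm ((LM_mono (reduct_mono hP M)).trans h.ge)

lemma isStable_of_subset_of_isModel (hP : P' ⊆ P) (h : isStable P' M)
    (hM : IsModel (reduct P M) M) : isStable P M :=
  (h.subset.trans (LM_mono (reduct_mono hP M))).antisymm (LM_subset_of_isModel hM)

lemma mem_progA {r : LPRule α} :
    r ∈ progA P A ↔ r ∈ P ∧ (↑r.pos : Set α) ⊆ A ∧ (↑r.neg : Set α) ∩ A = ∅ :=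
  Finset.mem_filter

lemma progA_subset (P : LProgram α) (A : Set α) : progA P A ⊆ P :=
  Finset.filter_subset _ _

lemma progA_progA (P : LProgram α) (A : Set α) : progA (progA P A) A = progA P A := by
  simp only [progA, Finset.filter_filter, and_self]

lemma isModel_reduct_of_isStable_progA (hstab : isStable (progA P A) (A ∪ {a}))
    (hP' : ∀ r ∈ P, (↑r.neg : Set α) ∩ A = ∅ → r.head ∉ A → (↑r.pos : Set α) \ A ≠ {a}) :
    IsModel (reduct P (A ∪ {a})) (A ∪ {a}) := by
  refine isModel_reduct_iff.2 fun r hr hnegM hposM => ?_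
  have hneg : (↑r.neg : Set α) ∩ A = ∅ :=
    Set.subset_empty_iff.1 (hnegM ▸ Set.inter_subset_inter_right _ Set.subset_union_left)
  rcases subset_union_singleton_iff.1 hposM with hpos | hdiff
  · exact hstab.head_mem (mem_progA.2 ⟨hr, hpos, hneg⟩) hnegM hposM
  · by_contra hhead
    exact hP' r hr hneg (fun h => hhead (Or.inl h)) hdiff

end

lemma pos_diff_ne_singleton_of_isStable {P : LProgram α} {A : Set α} {a : α}
    (hstab : isStable P (A ∪ {a})) {r : LPRule α}
    (hr : r ∈ P) (hproper : r.proper) (hneg : (↑r.neg : Set α) ∩ A = ∅) (hhead : r.head ∉ A) :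
    (↑r.pos : Set α) \ A ≠ {a} := by
  intro hdiff
  have ha_pos : a ∈ r.pos := (hdiff.symm ▸ Set.mem_singleton a : a ∈ (↑r.pos : Set α) \ A).1
  have ha_neg : a ∉ r.neg :=
    Finset.disjoint_left.1 (Finset.disjoint_iff_inter_eq_empty.2 hproper.2) ha_pos
  have hnegM : (↑r.neg : Set α) ∩ (A ∪ {a}) = ∅ := by
    rw [Set.inter_union_distrib_left, hneg, Set.inter_singleton_eq_empty.2 ha_neg,
      Set.union_empty]
  rcases hstab.head_mem hr hnegM (subset_union_singleton_iff.2 (Or.inr hdiff)) with hA | rfl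
  · exact hhead hA
  · exact hproper.1 ha_pos

-- The last conjunct says `a ≠ a_r` for every rule `r ∈ P′(A)`.
/-- a proper program `P` has an `A`-based stable model iff `P(A)` has an
`A`-based stable model `M = A ∪ {a}` such that `a ∉ {a_r : r ∈ P'(A)}`, where `P'(A)`
consists of the rules `r` of `P` with `b⁻(r) ∩ A = ∅`, `h(r) ∉ A` and `b⁺(r) \ A`
a singleton, whose unique element is `a_r`. -/
theorem abased_iff_abased_progA (P : LProgram α) (hP : ∀ r ∈ P, r.proper)
    (A : Set α) :
    (∃ M : Set α, isABased P A M) ↔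
      (∃ a, a ∉ A ∧ isABased (progA P A) A (A ∪ {a}) ∧
        ∀ r ∈ P, (↑r.neg : Set α) ∩ A = ∅ → r.head ∉ A →
          (↑r.pos : Set α) \ A ≠ {a}) := by
  constructor
  · rintro ⟨M, hstab, a, haA, rfl, hderiv⟩
    refine ⟨a, haA, ⟨?_, a, haA, rfl, by rwa [progA_progA]⟩, fun r hr =>
      pos_diff_ne_singleton_of_isStable hstab hr (hP r hr)⟩
    exact isStable_of_subset_of_subset_LM (progA_subset P A) hstab hderiv
  · rintro ⟨a, haA, ⟨hstab, -⟩, hP'⟩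
    refine ⟨A ∪ {a}, ?_, a, haA, rfl, hstab.subset⟩
    exact isStable_of_subset_of_isModel (progA_subset P A) hstab
      (isModel_reduct_of_isStable_progA hstab hP')
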